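/- Let a, b, c be real numbers with c ≠ 0. For every 3×3 matrix P of real polynomials, (P·D₂)·D₁ = (P·D₂)·D₂ + (2(c²+2)/c²)·((P·D₁) - (P·D₂)) as matrices of polynomials; that is, the operators satisfy the relation D₂D₁ = D₂² + (2(c²+2)/c²)(D₁ - D₂). -/

import Mathlib

/-!
Writing `∂` for the entrywise derivative, both operators have the form
`P ↦ ∂²P·A₂ + ∂P·A₁ + P·A₀`, and by the Leibniz rule `∂(PQ) = ∂P·Q + P·∂Q` the composite of two
such operators is `P ↦ ∑_{k ≤ 4} ∂ᵏP·Cₖ`, where the `Cₖ` are explicit polynomial expressions in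
the coefficients and in the derivatives of the inner operator's coefficients. Written as
`(P·D₂)·(D₁ - D₂) = s·(P·(D₁ - D₂))` with `s = 2(c² + 2)/c² = 2 + 4/c²`, the relation therefore
follows from five identities between 3 × 3 polynomial matrices, one for each order `k`, and
these are checked by evaluating at every real point.
-/

open Matrix Polynomial

/-- First-order (polynomial) coefficient of the operator D₁. -/
noncomputable def F1p (a b c : ℝ) : Matrix (Fin 3) (Fin 3) (Polynomial ℝ) :=
  !![C (2 * b) - 2 * X, C (-2 * a * b) * X + C (2 * a), 0;
     0, -2 * X, 0;
     0, C (2 * c), -2 * X]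

/-- Zeroth-order coefficient of the operator D₁. -/
noncomputable def F0p : Matrix (Fin 3) (Fin 3) (Polynomial ℝ) :=
  !![0, 0, 0; 0, 2, 0; 0, 0, 0]

/-- Second-order (polynomial) coefficient of the operator D₂. -/
noncomputable def G2p (a c : ℝ) : Matrix (Fin 3) (Fin 3) (Polynomial ℝ) :=
  !![0, C a * X, 0; 0, 1, 0; 0, C c * X, 0]

/-- First-order (polynomial) coefficient of the operator D₂. -/
noncomputable def G1p (a c : ℝ) : Matrix (Fin 3) (Fin 3) (Polynomial ℝ) :=
  !![0, C (2 * a), C (-2 * a / c) * X;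
     0, 0, C (-2 / c);
     0, C (2 * c + 2 / c), -2 * X]

/-- Zeroth-order coefficient of the operator D₂. -/
noncomputable def G0p (a c : ℝ) : Matrix (Fin 3) (Fin 3) (Polynomial ℝ) :=
  !![C (2 + 4 / c ^ 2), 0, C (-2 * a / c);
     0, C (2 + 4 / c ^ 2), 0;
     0, 0, 0]

/-- The right action of D₁ on a matrix polynomial: P·D₁ = P'' + P'·F₁ + P·F₀. -/
noncomputable def rightD1 (a b c : ℝ) (P : Matrix (Fin 3) (Fin 3) (Polynomial ℝ)) :
    Matrix (Fin 3) (Fin 3) (Polynomial ℝ) :=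
  P.map (fun p => derivative (derivative p))
    + P.map (fun p => derivative p) * F1p a b c + P * F0p

/-- The right action of D₂ on a matrix polynomial: P·D₂ = P''·G₂ + P'·G₁ + P·G₀. -/
noncomputable def rightD2 (a c : ℝ) (P : Matrix (Fin 3) (Fin 3) (Polynomial ℝ)) :
    Matrix (Fin 3) (Fin 3) (Polynomial ℝ) :=
  P.map (fun p => derivative (derivative p)) * G2p a c
    + P.map (fun p => derivative p) * G1p a c + P * G0p a c

namespace Matrix

variable {R : Type*} [CommRing R] {l m n : Type*}

noncomputable def derivative (P : Matrix m n R[X]) : Matrix m n R[X] :=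
  P.map Polynomial.derivative

@[simp]
lemma derivative_add (P Q : Matrix m n R[X]) : (P + Q).derivative = P.derivative + Q.derivative :=
  ext fun _ _ => Polynomial.derivative_add

lemma derivative_mul [Fintype m] (P : Matrix l m R[X]) (Q : Matrix m n R[X]) :
    (P * Q).derivative = P.derivative * Q + P * Q.derivative := by
  ext i j
  simp [derivative, mul_apply, Finset.sum_add_distrib]

lemma derivative_derivative (P : Matrix m n R[X]) :
    P.derivative.derivative = P.map fun p => Polynomial.derivative (Polynomial.derivative p) :=
  P.map_map

noncomputable def rightDiffOp2 [Fintype n] (A₂ A₁ A₀ : Matrix n n R[X]) (P : Matrix m n R[X]) :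
    Matrix m n R[X] :=
  P.derivative.derivative * A₂ + P.derivative * A₁ + P * A₀

noncomputable def rightDiffOp4 [Fintype n] (A₄ A₃ A₂ A₁ A₀ : Matrix n n R[X])
    (P : Matrix m n R[X]) : Matrix m n R[X] :=
  P.derivative.derivative.derivative.derivative * A₄ + P.derivative.derivative.derivative * A₃
    + P.derivative.derivative * A₂ + P.derivative * A₁ + P * A₀

variable [Fintype n]

lemma rightDiffOp2_sub (A₂ A₁ A₀ B₂ B₁ B₀ : Matrix n n R[X]) (P : Matrix m n R[X]) :
    rightDiffOp2 A₂ A₁ A₀ P - rightDiffOp2 B₂ B₁ B₀ P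
      = rightDiffOp2 (A₂ - B₂) (A₁ - B₁) (A₀ - B₀) P := by
  simp only [rightDiffOp2, Matrix.mul_sub]
  abel

lemma smul_rightDiffOp2_eq_rightDiffOp4 (r : R) (A₂ A₁ A₀ : Matrix n n R[X])
    (P : Matrix m n R[X]) :
    r • rightDiffOp2 A₂ A₁ A₀ P = rightDiffOp4 0 0 (r • A₂) (r • A₁) (r • A₀) P := by
  simp [rightDiffOp2, rightDiffOp4, Matrix.mul_smul]

lemma rightDiffOp2_rightDiffOp2 (A₂ A₁ A₀ B₂ B₁ B₀ : Matrix n n R[X]) (P : Matrix m n R[X]) :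
    rightDiffOp2 B₂ B₁ B₀ (rightDiffOp2 A₂ A₁ A₀ P)
      = rightDiffOp4 (A₂ * B₂) ((2 • A₂.derivative + A₁) * B₂ + A₂ * B₁)
          ((A₂.derivative.derivative + 2 • A₁.derivative + A₀) * B₂
            + (A₂.derivative + A₁) * B₁ + A₂ * B₀)
          ((A₁.derivative.derivative + 2 • A₀.derivative) * B₂ + (A₁.derivative + A₀) * B₁
            + A₁ * B₀)
          (A₀.derivative.derivative * B₂ + A₀.derivative * B₁ + A₀ * B₀) P := by
  simp only [rightDiffOp2, rightDiffOp4, derivative_add, derivative_mul, Matrix.mul_add,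
    Matrix.add_mul, Matrix.mul_assoc, two_smul]
  abel

lemma eq_of_forall_aeval [IsDomain R] [Infinite R] [DecidableEq n] {M N : Matrix n n R[X]}
    (h : ∀ x : R, (aeval x).mapMatrix M = (aeval x).mapMatrix N) : M = N :=
  ext fun i j => Polynomial.funext fun x => by simpa using congrFun (congrFun (h x) i) j

lemma map_fin_three {α β : Type*} (M : Matrix (Fin 3) (Fin 3) α) (f : α → β) :
    M.map f = !![f (M 0 0), f (M 0 1), f (M 0 2); f (M 1 0), f (M 1 1), f (M 1 2);
      f (M 2 0), f (M 2 1), f (M 2 2)] :=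
  eta_fin_three _

end Matrix

lemma rightD1_eq_rightDiffOp2 (a b c : ℝ) (P : Matrix (Fin 3) (Fin 3) ℝ[X]) :
    rightD1 a b c P = rightDiffOp2 1 (F1p a b c) F0p P := by
  rw [rightD1, rightDiffOp2, derivative_derivative, Matrix.derivative, Matrix.mul_one]

lemma rightD2_eq_rightDiffOp2 (a c : ℝ) (P : Matrix (Fin 3) (Fin 3) ℝ[X]) :
    rightD2 a c P = rightDiffOp2 (G2p a c) (G1p a c) (G0p a c) P := by
  rw [rightD2, rightDiffOp2, derivative_derivative, Matrix.derivative]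

lemma rightD1_sub_rightD2 (a b c : ℝ) (P : Matrix (Fin 3) (Fin 3) ℝ[X]) :
    rightD1 a b c P - rightD2 a c P
      = rightDiffOp2 (1 - G2p a c) (F1p a b c - G1p a c) (F0p - G0p a c) P := by
  rw [rightD1_eq_rightDiffOp2, rightD2_eq_rightDiffOp2, rightDiffOp2_sub]

/-- the relation D₂D₁ = D₂² + (2(c²+2)/c²)(D₁ - D₂):
(P·D₂)·D₁ = (P·D₂)·D₂ + (2(c²+2)/c²)·((P·D₁) - (P·D₂)) for every matrix polynomial P. -/
theorem D1_D2_relation (a b c : ℝ) (hc : c ≠ 0)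
    (P : Matrix (Fin 3) (Fin 3) (Polynomial ℝ)) :
    rightD1 a b c (rightD2 a c P)
      = rightD2 a c (rightD2 a c P)
        + (2 * (c ^ 2 + 2) / c ^ 2 : ℝ) • (rightD1 a b c P - rightD2 a c P) := by
  rw [← sub_eq_iff_eq_add', rightD1_sub_rightD2, rightD1_sub_rightD2, rightD2_eq_rightDiffOp2,
    rightDiffOp2_rightDiffOp2, smul_rightDiffOp2_eq_rightDiffOp4]
  -- `s` in the form it takes in `G0p`, so that it cancels syntactically below
  have hs : (2 * (c ^ 2 + 2) / c ^ 2 : ℝ) = 2 + 4 / c ^ 2 := by field_simp; ring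
  rw [hs]
  congr 1 <;> refine eq_of_forall_aeval fun x => ?_ <;>
    simp only [AlgHom.mapMatrix_apply, map_fin_three] <;>
    simp [G2p, G1p, G0p, F1p, F0p, Matrix.derivative, map_fin_three, one_fin_three] <;>
    and_intros <;> field_simp <;> ring
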